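/- The revised call-by-need λ-calculus is confluent (satisfies the Church–Rosser property): if e ↠ e₁ and e ↠ e₂, then there exists e₃ such that e₁ ↠ e₃ and e₂ ↠ e₃ (up to α-equivalence). -/

import Mathlib

/-!
Confluence is proved by the Tait–Martin-Löf method. Parallel reduction `Par`, which contracts
any set of β_need, lift and assoc redexes at once, lies between one-step reduction and its
reflexive-transitive closure, so it suffices that `Par` has the diamond property.

The three notions of reduction do not overlap: an answer never has the shape `E[x]`, so an
application whose operator is `λx.A` with `A` an answer is neither a β_need nor an assoc
redex. The diamond property therefore follows by induction on the term, once `Par` is known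
to commute with shifting and substitution and to preserve answers and the shape `E[x]`.
-/

namespace NeedCalc

/-- Terms of the pure λ-calculus, in de Bruijn representation (so that
    α-equivalent terms are syntactically equal). -/
inductive Tm : Type
  | bvar : Nat → Tm
  | lam  : Tm → Tm
  | app  : Tm → Tm → Tm
deriving DecidableEq

namespace Tm

/-- Shift the free de Bruijn indices ≥ k up by n. -/
def lift (n : Nat) : Nat → Tm → Tm
  | k, .bvar i => if i < k then .bvar i else .bvar (i + n)
  | k, .lam b => .lam (lift n (k+1) b)
  | k, .app f a => .app (lift n k f) (lift n k a)

/-- Capture-avoiding substitution of `s` for the de Bruijn index `k`. -/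
def subst : Tm → Nat → Tm → Tm
  | .bvar i, k, s => if i = k then lift k 0 s else if k < i then .bvar (i-1) else .bvar i
  | .lam b, k, s => .lam (subst b (k+1) s)
  | .app f a, k, s => .app (subst f k s) (subst a k s)

end Tm

/-- Values V ::= λx.e. -/
def IsValT (t : Tm) : Prop := ∃ b, t = Tm.lam b

/-- Answers A ::= V | ((λx.A) e). -/
inductive IsAnswer : Tm → Prop
  | lam (b : Tm) : IsAnswer (.lam b)
  | app {a : Tm} (e : Tm) : IsAnswer a → IsAnswer (.app (.lam a) e)

/-- Evaluation contexts
    E ::= □ | (E e) | ((λx.E₁[x]) E) | ((λx.E) e).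
    In `appNeed B E` the context `B` is the body context whose hole is
    filled with the variable bound by the λ (de Bruijn index `B.depth`),
    and the overall hole is in the argument context `E`. -/
inductive ECtx : Type
  | hole    : ECtx
  | appL    : ECtx → Tm → ECtx
  | appNeed : ECtx → ECtx → ECtx
  | appBody : ECtx → Tm → ECtx

/-- Number of λ-binders crossed between the root of the context and its hole. -/
def ECtx.depth : ECtx → Nat
  | .hole => 0
  | .appL E _ => E.depth
  | .appNeed _ E => E.depth
  | .appBody E _ => E.depth + 1

/-- Plugging a term into the hole of an evaluation context. -/
def ECtx.plug : ECtx → Tm → Tm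
  | .hole, t => t
  | .appL E e, t => .app (E.plug t) e
  | .appNeed B E, t => .app (.lam (B.plug (.bvar B.depth))) (E.plug t)
  | .appBody E e, t => .app (.lam (E.plug t)) e

/-- The notions of reduction of the revised call-by-need λ-calculus:
    β_need, lift, and assoc. -/
inductive Redn : Tm → Tm → Prop
  | beta (E : ECtx) (b : Tm) :
      Redn (.app (.lam (E.plug (.bvar E.depth))) (.lam b))
           (Tm.subst (E.plug (.bvar E.depth)) 0 (.lam b))
  | liftR {a : Tm} (e e' : Tm) : IsAnswer a →
      Redn (.app (.app (.lam a) e) e')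
           (.app (.lam (.app a (Tm.lift 1 0 e'))) e)
  | assoc (E : ECtx) {a : Tm} (e : Tm) : IsAnswer a →
      Redn (.app (.lam (E.plug (.bvar E.depth))) (.app (.lam a) e))
           (.app (.lam (.app (Tm.lift 1 0 (.lam (E.plug (.bvar E.depth)))) a)) e)

/-- One-step reduction: the compatible (contextual) closure of the notions of
    reduction. -/
inductive Red1 : Tm → Tm → Prop
  | base {t t' : Tm} : Redn t t' → Red1 t t'
  | lam {b b' : Tm} : Red1 b b' → Red1 (.lam b) (.lam b')
  | appL {f f' : Tm} (a : Tm) : Red1 f f' → Red1 (.app f a) (.app f' a)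
  | appR (f : Tm) {a a' : Tm} : Red1 a a' → Red1 (.app f a) (.app f a')

/-- Reflexive-transitive closure of one-step reduction. -/
def Reds : Tm → Tm → Prop := Relation.ReflTransGen Red1

/-- Standard reduction: contract only the redex in the hole of an evaluation
    context. -/
inductive StdStep : Tm → Tm → Prop
  | mk (E : ECtx) (r r' : Tm) : Redn r r' → StdStep (E.plug r) (E.plug r')

end NeedCalc

namespace NeedCalc

namespace Tm

theorem lift_lift_of_le (n m : Nat) (t : Tm) {i k : Nat} (h : i ≤ k) :
    lift n (k + m) (lift m i t) = lift m i (lift n k t) := by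
  induction t generalizing i k with
  | bvar x => grind [lift]
  | lam b ih => simp only [lift]; rw [Nat.add_right_comm, ih (by omega)]
  | app f a ihf iha => simp only [lift, ihf h, iha h]

theorem lift_lift_add (m j c i : Nat) (t : Tm) (h : i ≤ j) :
    lift m (i + c) (lift j c t) = lift (j + m) c t := by
  induction t generalizing c with
  | bvar x => grind [lift]
  | lam b ih => simp only [lift]; rw [← ih (c + 1), Nat.add_assoc]
  | app f a ihf iha => simp only [lift, ihf, iha]

theorem lift_subst (n : Nat) (t s : Tm) {j k : Nat} (h : j ≤ k) :
    lift n k (subst t j s) = subst (lift n (k + 1) t) j (lift n (k - j) s) := by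
  induction t generalizing j k with
  | bvar x => grind [lift, subst, lift_lift_of_le n x s (Nat.zero_le (k - x))]
  | lam b ih =>
    simp only [subst, lift]
    rw [ih (by omega), show k + 1 - (j + 1) = k - j by omega]
  | app f a ihf iha => simp only [subst, lift, ihf h, iha h]

theorem subst_lift_of_lt (m i : Nat) (h : i < m) (t s : Tm) (c : Nat) :
    subst (lift m c t) (c + i) s = lift (m - 1) c t := by
  induction t generalizing c with
  | bvar x => grind [lift, subst]
  | lam b ih => simp only [lift, subst]; rw [← ih (c + 1), Nat.add_right_comm]
  | app f a ihf iha => simp only [lift, subst, ihf, iha]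

theorem subst_lift_of_le (m : Nat) (t s : Tm) {c j : Nat} (h : c ≤ j) :
    subst (lift m c t) (j + m) s = lift m c (subst t j s) := by
  induction t generalizing c j with
  | bvar x => grind [lift, subst, lift_lift_add m j 0 c s h]
  | lam b ih =>
    simp only [lift, subst]
    rw [← ih (by omega : c + 1 ≤ j + 1), Nat.add_right_comm]
  | app f a ihf iha => simp only [lift, subst, ihf h, iha h]

theorem subst_subst (t u v : Tm) (i j : Nat) :
    subst (subst t i u) (i + j) v = subst (subst t (i + j + 1) v) i (subst u j v) := by
  induction t generalizing i with
  | bvar x =>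
    have hu := subst_lift_of_le x u v (Nat.zero_le j)
    have hv := subst_lift_of_lt (i + j + 1) i (by omega) v (subst u j v) 0
    grind [subst]
  | lam b ih => simp only [subst]; rw [Nat.add_right_comm, ih, Nat.add_right_comm i 1 j]
  | app f a ihf iha => simp only [subst, ihf, iha]

end Tm

/-- `Needy n t` says `t = E[x]` with `x` the variable of index `n`; unlike the `ECtx` form it can
be pushed through shifting, substitution and `Par` by induction. -/
inductive Needy : Nat → Tm → Prop
  | bvar (n : Nat) : Needy n (.bvar n)
  | appL {n : Nat} {f : Tm} (a : Tm) : Needy n f → Needy n (.app f a)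
  | appNeed {n : Nat} {b a : Tm} : Needy 0 b → Needy n a → Needy n (.app (.lam b) a)
  | appBody {n : Nat} {b : Tm} (a : Tm) : Needy (n + 1) b → Needy n (.app (.lam b) a)

theorem needy_iff_exists_plug {k : Nat} {t : Tm} :
    Needy k t ↔ ∃ E : ECtx, t = E.plug (.bvar (E.depth + k)) := by
  constructor
  · intro h
    induction h with
    | bvar n => exact ⟨.hole, by simp [ECtx.plug, ECtx.depth]⟩
    | appL a _ ih =>
      obtain ⟨E, rfl⟩ := ih
      exact ⟨.appL E a, rfl⟩
    | appNeed _ _ ihb iha =>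
      obtain ⟨B, hB⟩ := ihb
      obtain ⟨E, rfl⟩ := iha
      exact ⟨.appNeed B E, by simpa [ECtx.plug, ECtx.depth] using hB⟩
    | @appBody n b a _ ih =>
      obtain ⟨E, rfl⟩ := ih
      exact ⟨.appBody E a, by simp [ECtx.plug, ECtx.depth, Nat.add_right_comm, Nat.add_assoc]⟩
  · rintro ⟨E, rfl⟩
    induction E generalizing k with
    | hole => simpa [ECtx.plug, ECtx.depth] using Needy.bvar k
    | appL E e ih => exact .appL e ih
    | appNeed B E ihB ihE => exact .appNeed (ihB (k := 0)) ihE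
    | appBody E e ih =>
      refine .appBody e ?_
      simpa [ECtx.depth, Nat.add_right_comm, Nat.add_assoc] using ih (k := k + 1)

theorem IsAnswer.not_needy {t : Tm} (h : IsAnswer t) (n : Nat) : ¬ Needy n t := by
  induction h generalizing n with
  | lam b => rintro ⟨⟩
  | app e _ ih =>
    intro hn
    cases hn with
    | appL _ h => cases h
    | appNeed hb _ => exact ih 0 hb
    | appBody _ hb => exact ih _ hb

theorem IsAnswer.lift {t : Tm} (h : IsAnswer t) (n k : Nat) : IsAnswer (t.lift n k) := by
  induction h generalizing k with
  | lam _ => exact .lam _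
  | app e _ ih => exact .app _ (ih (k + 1))

theorem IsAnswer.subst {t : Tm} (h : IsAnswer t) (j : Nat) (s : Tm) : IsAnswer (t.subst j s) := by
  induction h generalizing j with
  | lam _ => exact .lam _
  | app e _ ih => exact .app _ (ih (j + 1))

namespace Needy

theorem lift_of_lt {n : Nat} {t : Tm} (h : Needy n t) (m : Nat) {k : Nat} (hk : n < k) :
    Needy n (t.lift m k) := by
  induction h generalizing k with
  | bvar n => simpa [Tm.lift, hk] using Needy.bvar n
  | appL a _ ih => exact .appL _ (ih hk)
  | appNeed _ _ ihb iha => exact .appNeed (ihb (by omega)) (iha hk)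
  | appBody a _ ih => exact .appBody _ (ih (by omega))

theorem lift_of_le {n : Nat} {t : Tm} (h : Needy n t) (m : Nat) {k : Nat} (hk : k ≤ n) :
    Needy (n + m) (t.lift m k) := by
  induction h generalizing k with
  | bvar n => simpa [Tm.lift, show ¬ n < k by omega] using Needy.bvar (n + m)
  | appL a _ ih => exact .appL _ (ih hk)
  | appNeed hb _ _ iha => exact .appNeed (hb.lift_of_lt m (by omega)) (iha hk)
  | appBody a _ ih => exact .appBody _ (Nat.add_right_comm .. ▸ ih (by omega))

theorem subst_of_lt {n : Nat} {t : Tm} (h : Needy n t) {j : Nat} (s : Tm) (hj : n < j) :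
    Needy n (t.subst j s) := by
  induction h generalizing j with
  | bvar n => simpa [Tm.subst, hj.ne, hj.not_gt] using Needy.bvar n
  | appL a _ ih => exact .appL _ (ih hj)
  | appNeed _ _ ihb iha => exact .appNeed (ihb (by omega)) (iha hj)
  | appBody a _ ih => exact .appBody _ (ih (by omega))

theorem subst_of_le {n : Nat} {t : Tm} (h : Needy (n + 1) t) {j : Nat} (s : Tm) (hj : j ≤ n) :
    Needy n (t.subst j s) := by
  generalize hm : n + 1 = m at h
  induction h generalizing n j with
  | bvar x =>
    subst hm
    simpa [Tm.subst, show ¬ n + 1 = j by omega, show j < n + 1 by omega] using Needy.bvar n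
  | appL a _ ih => exact .appL _ (ih hj hm)
  | appNeed hb _ _ iha => exact .appNeed (hb.subst_of_lt s (by omega)) (iha hj hm)
  | appBody a _ ih => exact .appBody _ (ih (by omega) (by omega))

end Needy

inductive Par : Tm → Tm → Prop
  | bvar (i : Nat) : Par (.bvar i) (.bvar i)
  | lam {b b' : Tm} : Par b b' → Par (.lam b) (.lam b')
  | app {f f' a a' : Tm} : Par f f' → Par a a' → Par (.app f a) (.app f' a')
  | beta {m m' b b' : Tm} : Needy 0 m → Par m m' → Par b b' →
      Par (.app (.lam m) (.lam b)) (m'.subst 0 (.lam b'))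
  | liftR {a a' e e₁ e' e₁' : Tm} : IsAnswer a → Par a a' → Par e e₁ → Par e' e₁' →
      Par (.app (.app (.lam a) e) e') (.app (.lam (.app a' (e₁'.lift 1 0))) e₁)
  | assoc {m m' a a' e e₁ : Tm} :
      Needy 0 m → IsAnswer a → Par m m' → Par a a' → Par e e₁ →
      Par (.app (.lam m) (.app (.lam a) e)) (.app (.lam (.app ((Tm.lam m').lift 1 0) a')) e₁)

namespace Par

theorem refl : ∀ t : Tm, Par t t
  | .bvar i => .bvar i
  | .lam b => .lam (refl b)
  | .app f a => .app (refl f) (refl a)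

theorem lam_inv {b t : Tm} (h : Par (.lam b) t) : ∃ b', t = .lam b' ∧ Par b b' := by
  cases h with
  | lam hb => exact ⟨_, rfl, hb⟩

theorem answer_app_inv {a e t : Tm} (ha : IsAnswer a) (h : Par (.app (.lam a) e) t) :
    ∃ a' e', t = .app (.lam a') e' ∧ Par a a' ∧ Par e e' := by
  cases h with
  | app hf he =>
    obtain ⟨a', rfl, ha'⟩ := lam_inv hf
    exact ⟨a', _, rfl, ha', he⟩
  | beta hm _ _ => exact absurd hm (ha.not_needy 0)
  | assoc hm _ _ _ _ => exact absurd hm (ha.not_needy 0)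

theorem lift {t t' : Tm} (h : Par t t') (n k : Nat) : Par (t.lift n k) (t'.lift n k) := by
  induction h generalizing k with
  | bvar _ => exact refl _
  | lam _ ih => exact .lam (ih (k + 1))
  | app _ _ ihf iha => exact .app (ihf k) (iha k)
  | @beta _ m' _ b' hm _ _ ihm ihb =>
    have hsubst : (m'.subst 0 (.lam b')).lift n k =
        (m'.lift n (k + 1)).subst 0 (.lam (b'.lift n (k + 1))) := by
      simp [Tm.lift_subst n m' (.lam b') (Nat.zero_le k), Tm.lift]
    rw [hsubst]
    exact .beta (hm.lift_of_lt n (by omega)) (ihm (k + 1)) (ihb (k + 1))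
  | @liftR _ _ _ _ _ e₁' ha _ _ _ iha ihe ihe' =>
    have hlift : (e₁'.lift 1 0).lift n (k + 1) = (e₁'.lift n k).lift 1 0 :=
      Tm.lift_lift_of_le n 1 e₁' (Nat.zero_le k)
    simp only [Tm.lift, hlift]
    exact .liftR (ha.lift n (k + 1)) (iha (k + 1)) (ihe k) (ihe' k)
  | @assoc _ m' _ _ _ _ hm ha _ _ _ ihm iha ihe =>
    have hlift : (m'.lift 1 1).lift n (k + 1 + 1) = (m'.lift n (k + 1)).lift 1 1 :=
      Tm.lift_lift_of_le n 1 m' (by omega)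
    simp only [Tm.lift, Nat.zero_add, hlift]
    exact .assoc (hm.lift_of_lt n (by omega)) (ha.lift n (k + 1)) (ihm (k + 1)) (iha (k + 1))
      (ihe k)

theorem subst {t t' s s' : Tm} (h : Par t t') (hs : Par s s') (j : Nat) :
    Par (t.subst j s) (t'.subst j s') := by
  induction h generalizing j with
  | bvar i =>
    simp only [Tm.subst]
    split_ifs
    exacts [hs.lift _ _, .bvar _, .bvar _]
  | lam _ ih => exact .lam (ih (j + 1))
  | app _ _ ihf iha => exact .app (ihf j) (iha j)
  | @beta _ m' _ b' hm _ _ ihm ihb =>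
    have hsubst : (m'.subst 0 (.lam b')).subst j s' =
        (m'.subst (j + 1) s').subst 0 (.lam (b'.subst (j + 1) s')) := by
      simpa [Tm.subst] using Tm.subst_subst m' (.lam b') s' 0 j
    rw [hsubst]
    exact .beta (hm.subst_of_lt s (by omega)) (ihm (j + 1)) (ihb (j + 1))
  | @liftR _ _ _ _ _ e₁' ha _ _ _ iha ihe ihe' =>
    have hlift : (e₁'.lift 1 0).subst (j + 1) s' = (e₁'.subst j s').lift 1 0 := by
      simpa using Tm.subst_lift_of_le 1 e₁' s' (Nat.zero_le j)
    simp only [Tm.subst, hlift]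
    exact .liftR (ha.subst (j + 1) s) (iha (j + 1)) (ihe j) (ihe' j)
  | @assoc _ m' _ _ _ _ hm ha _ _ _ ihm iha ihe =>
    have hlift : (m'.lift 1 1).subst (j + 1 + 1) s' = (m'.subst (j + 1) s').lift 1 1 :=
      Tm.subst_lift_of_le 1 m' s' (by omega)
    simp only [Tm.subst, Tm.lift, Nat.zero_add, hlift]
    exact .assoc (hm.subst_of_lt s (by omega)) (ha.subst (j + 1) s) (ihm (j + 1)) (iha (j + 1))
      (ihe j)

end Par

theorem IsAnswer.par {t t' : Tm} (ha : IsAnswer t) (h : Par t t') : IsAnswer t' := by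
  induction ha generalizing t' with
  | lam b =>
    obtain ⟨b', rfl, -⟩ := h.lam_inv
    exact .lam b'
  | app e hans ih =>
    obtain ⟨a', e', rfl, ha', -⟩ := Par.answer_app_inv hans h
    exact .app e' (ih ha')

theorem Needy.par {n : Nat} {t t' : Tm} (hn : Needy n t) (h : Par t t') : Needy n t' := by
  induction hn generalizing t' with
  | bvar n => cases h; exact .bvar n
  | appL a hf ih =>
    cases h with
    | app hf' _ => exact .appL _ (ih hf')
    | beta => cases hf
    | assoc => cases hf
    | liftR ha =>
      cases hf with
      | appL _ h => cases h
      | appNeed hb _ => exact absurd hb (ha.not_needy _)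
      | appBody _ hb => exact absurd hb (ha.not_needy _)
  | appNeed hb ha ihb iha =>
    cases h with
    | app hf ha' =>
      obtain ⟨b', rfl, hb'⟩ := hf.lam_inv
      exact .appNeed (ihb hb') (iha ha')
    | beta => cases ha
    | assoc _ hans =>
      cases ha with
      | appL _ h => cases h
      | appNeed h _ => exact absurd h (hans.not_needy _)
      | appBody _ h => exact absurd h (hans.not_needy _)
  | appBody a hb ih =>
    cases h with
    | app hf _ =>
      obtain ⟨b', rfl, hb'⟩ := hf.lam_inv
      exact .appBody _ (ih hb')
    | beta _ hm => exact (ih hm).subst_of_le _ (Nat.zero_le _)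
    | assoc _ _ hm => exact .appBody _ (.appBody _ ((ih hm).lift_of_le 1 (by omega)))

def DiamondAt (t : Tm) : Prop :=
  ∀ ⦃u v : Tm⦄, Par t u → Par t v → ∃ w, Par u w ∧ Par v w

namespace DiamondAt

theorem beta {m m₁ b b₁ v : Tm} (hm : Needy 0 m) (dm : DiamondAt m) (db : DiamondAt b)
    (pm : Par m m₁) (pb : Par b b₁) (h : Par (.app (.lam m) (.lam b)) v) :
    ∃ w, Par (m₁.subst 0 (.lam b₁)) w ∧ Par v w := by
  cases h with
  | app hf ha =>
    obtain ⟨m₂, rfl, pm₂⟩ := hf.lam_inv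
    obtain ⟨b₂, rfl, pb₂⟩ := ha.lam_inv
    obtain ⟨m₃, hm₁, hm₂⟩ := dm pm pm₂
    obtain ⟨b₃, hb₁, hb₂⟩ := db pb pb₂
    exact ⟨_, hm₁.subst (.lam hb₁) 0, .beta (hm.par pm₂) hm₂ hb₂⟩
  | beta _ pm₂ pb₂ =>
    obtain ⟨m₃, hm₁, hm₂⟩ := dm pm pm₂
    obtain ⟨b₃, hb₁, hb₂⟩ := db pb pb₂
    exact ⟨_, hm₁.subst (.lam hb₁) 0, hm₂.subst (.lam hb₂) 0⟩

theorem liftR {a a₁ e e₁ e' e₁' v : Tm} (ha : IsAnswer a)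
    (da : DiamondAt a) (de : DiamondAt e) (de' : DiamondAt e')
    (pa : Par a a₁) (pe : Par e e₁) (pe' : Par e' e₁')
    (h : Par (.app (.app (.lam a) e) e') v) :
    ∃ w, Par (.app (.lam (.app a₁ (e₁'.lift 1 0))) e₁) w ∧ Par v w := by
  cases h with
  | app hf pe₂' =>
    obtain ⟨a₂, e₂, rfl, pa₂, pe₂⟩ := Par.answer_app_inv ha hf
    obtain ⟨a₃, ha₁, ha₂⟩ := da pa pa₂
    obtain ⟨e₃, he₁, he₂⟩ := de pe pe₂
    obtain ⟨e₃', he₁', he₂'⟩ := de' pe' pe₂'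
    exact ⟨_, .app (.lam (.app ha₁ (he₁'.lift 1 0))) he₁,
      .liftR (ha.par pa₂) ha₂ he₂ he₂'⟩
  | liftR _ pa₂ pe₂ pe₂' =>
    obtain ⟨a₃, ha₁, ha₂⟩ := da pa pa₂
    obtain ⟨e₃, he₁, he₂⟩ := de pe pe₂
    obtain ⟨e₃', he₁', he₂'⟩ := de' pe' pe₂'
    exact ⟨_, .app (.lam (.app ha₁ (he₁'.lift 1 0))) he₁,
      .app (.lam (.app ha₂ (he₂'.lift 1 0))) he₂⟩

theorem assoc {m m₁ a a₁ e e₁ v : Tm} (hm : Needy 0 m) (ha : IsAnswer a) (dm : DiamondAt m)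
    (da : DiamondAt a) (de : DiamondAt e) (pm : Par m m₁) (pa : Par a a₁) (pe : Par e e₁)
    (h : Par (.app (.lam m) (.app (.lam a) e)) v) :
    ∃ w, Par (.app (.lam (.app ((Tm.lam m₁).lift 1 0) a₁)) e₁) w ∧ Par v w := by
  cases h with
  | app hf harg =>
    obtain ⟨m₂, rfl, pm₂⟩ := hf.lam_inv
    obtain ⟨a₂, e₂, rfl, pa₂, pe₂⟩ := Par.answer_app_inv ha harg
    obtain ⟨m₃, hm₁, hm₂⟩ := dm pm pm₂
    obtain ⟨a₃, ha₁, ha₂⟩ := da pa pa₂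
    obtain ⟨e₃, he₁, he₂⟩ := de pe pe₂
    exact ⟨_, .app (.lam (.app ((Par.lam hm₁).lift 1 0) ha₁)) he₁,
      .assoc (hm.par pm₂) (ha.par pa₂) hm₂ ha₂ he₂⟩
  | assoc _ _ pm₂ pa₂ pe₂ =>
    obtain ⟨m₃, hm₁, hm₂⟩ := dm pm pm₂
    obtain ⟨a₃, ha₁, ha₂⟩ := da pa pa₂
    obtain ⟨e₃, he₁, he₂⟩ := de pe pe₂
    exact ⟨_, .app (.lam (.app ((Par.lam hm₁).lift 1 0) ha₁)) he₁,
      .app (.lam (.app ((Par.lam hm₂).lift 1 0) ha₂)) he₂⟩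

end DiamondAt

theorem par_diamond (t : Tm) : DiamondAt t := by
  intro u v h₁ h₂
  have swap {x y : Tm} : (∃ w, Par x w ∧ Par y w) → ∃ w, Par y w ∧ Par x w :=
    Exists.imp fun _ => And.symm
  cases h₁ with
  | bvar i => cases h₂; exact ⟨_, .bvar i, .bvar i⟩
  | lam pb₁ =>
    obtain ⟨b₂, rfl, pb₂⟩ := h₂.lam_inv
    obtain ⟨w, hw₁, hw₂⟩ := par_diamond _ pb₁ pb₂
    exact ⟨.lam w, .lam hw₁, .lam hw₂⟩
  | app pf₁ pa₁ =>
    cases h₂ with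
    | app pf₂ pa₂ =>
      obtain ⟨wf, hf₁, hf₂⟩ := par_diamond _ pf₁ pf₂
      obtain ⟨wa, ha₁, ha₂⟩ := par_diamond _ pa₁ pa₂
      exact ⟨.app wf wa, .app hf₁ ha₁, .app hf₂ ha₂⟩
    | beta hm pm pb =>
      exact swap (DiamondAt.beta hm (par_diamond _) (par_diamond _) pm pb (.app pf₁ pa₁))
    | liftR ha pa pe pe' =>
      exact swap (DiamondAt.liftR ha (par_diamond _) (par_diamond _) (par_diamond _)
        pa pe pe' (.app pf₁ pa₁))
    | assoc hm ha pm pa pe =>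
      exact swap (DiamondAt.assoc hm ha (par_diamond _) (par_diamond _) (par_diamond _)
        pm pa pe (.app pf₁ pa₁))
  | beta hm pm pb => exact DiamondAt.beta hm (par_diamond _) (par_diamond _) pm pb h₂
  | liftR ha pa pe pe' =>
    exact DiamondAt.liftR ha (par_diamond _) (par_diamond _) (par_diamond _) pa pe pe' h₂
  | assoc hm ha pm pa pe =>
    exact DiamondAt.assoc hm ha (par_diamond _) (par_diamond _) (par_diamond _) pm pa pe h₂

theorem Redn.par {t t' : Tm} (h : Redn t t') : Par t t' := by
  cases h with
  | beta E _ => exact .beta (needy_iff_exists_plug.2 ⟨E, rfl⟩) (.refl _) (.refl _)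
  | liftR _ _ ha => exact .liftR ha (.refl _) (.refl _) (.refl _)
  | assoc E _ ha =>
    exact .assoc (needy_iff_exists_plug.2 ⟨E, rfl⟩) ha (.refl _) (.refl _) (.refl _)

theorem Red1.par {t t' : Tm} (h : Red1 t t') : Par t t' := by
  induction h with
  | base h => exact h.par
  | lam _ ih => exact .lam ih
  | appL a _ ih => exact .app ih (.refl a)
  | appR f _ ih => exact .app (.refl f) ih

theorem Reds.lam {b b' : Tm} (h : Reds b b') : Reds (.lam b) (.lam b') :=
  Relation.ReflTransGen.lift Tm.lam (fun _ _ => Red1.lam) _ _ h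

theorem Reds.app {f f' a a' : Tm} (hf : Reds f f') (ha : Reds a a') :
    Reds (.app f a) (.app f' a') :=
  (Relation.ReflTransGen.lift (Tm.app · a) (fun _ _ => Red1.appL a) _ _ hf).trans
    (Relation.ReflTransGen.lift (Tm.app f') (fun _ _ => Red1.appR f') _ _ ha)

theorem Par.reds {t t' : Tm} (h : Par t t') : Reds t t' := by
  induction h with
  | bvar _ => exact .refl
  | lam _ ih => exact ih.lam
  | app _ _ ihf iha => exact ihf.app iha
  | beta hm pm _ ihm ihb =>
    obtain ⟨E, hE⟩ := needy_iff_exists_plug.1 (hm.par pm)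
    refine .tail (ihm.lam.app ihb.lam) ?_
    rw [hE]
    exact .base (.beta E _)
  | liftR ha pa _ _ iha ihe ihe' =>
    exact .tail ((iha.lam.app ihe).app ihe') (.base (.liftR _ _ (ha.par pa)))
  | assoc hm ha pm pa _ ihm iha ihe =>
    obtain ⟨E, hE⟩ := needy_iff_exists_plug.1 (hm.par pm)
    refine .tail (ihm.lam.app (iha.lam.app ihe)) ?_
    rw [hE]
    exact .base (.assoc E _ (ha.par pa))

theorem reflTransGen_par_eq_reds : Relation.ReflTransGen Par = Reds :=
  le_antisymm (Relation.reflTransGen_closed fun _ _ => Par.reds)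
    (Relation.ReflTransGen.mono fun _ _ => Red1.par)

/-- the revised call-by-need λ-calculus is confluent
    (Church–Rosser); up to α-equivalence, which is syntactic equality in the
    de Bruijn representation. -/
theorem church_rosser (e e₁ e₂ : Tm) (h₁ : Reds e e₁) (h₂ : Reds e e₂) :
    ∃ e₃, Reds e₁ e₃ ∧ Reds e₂ e₃ := by
  rw [← reflTransGen_par_eq_reds] at *
  refine Relation.church_rosser (fun t u v hu hv => ?_) h₁ h₂
  obtain ⟨w, huw, hvw⟩ := par_diamond t hu hv
  exact ⟨w, .single huw, .single hvw⟩

end NeedCalc
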